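/- arXiv:2409.18085 — 2 statements merged into one kernel-verified Lean document; each statement's English description precedes it below -/
import Mathlib

section
/- For every natural number n, U_n(x) = 2^0 · 0! · Σ_{ℓ=0}^{n} C(n+ℓ+1, n−ℓ) · C(ℓ, 0) · (2(x−1))^ℓ, i.e., the Chebyshev polynomial of the second kind admits the expansion U_n(x) = Σ_{ℓ=0}^{n} C(n+ℓ+1, n−ℓ) (2(x−1))^ℓ for all real x. -/
/-!
Both sides satisfy the recurrence `f (n + 2) = 2 x f (n + 1) - f n` of `U`. With `y = 2 (x - 1)`,
so that `2 x = y + 2`, comparing coefficients of `y ^ ℓ` reduces this to the Pascal-type identity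
`C(N+2, k+2) + C(N, k+2) = 2 C(N+1, k+2) + C(N, k)`.
-/

open Polynomial Polynomial.Chebyshev

theorem Nat.choose_add_two_add_choose (n k : ℕ) :
    (n + 2).choose (k + 2) + n.choose (k + 2) = 2 * (n + 1).choose (k + 2) + n.choose k := by
  rw [Nat.choose_succ_succ (n + 1) (k + 1), Nat.choose_succ_succ n (k + 1),
    Nat.choose_succ_succ n k]
  simp only [Nat.succ_eq_add_one, add_assoc, Nat.reduceAdd]
  ring

namespace Polynomial.Chebyshev

open Finset

/-- `C(n+ℓ+1, n-ℓ)` written symmetrically, so that it vanishes for `ℓ > n` instead of truncating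
`n - ℓ` to `0`. -/
def uCoeff (n ℓ : ℕ) : ℕ := (n + ℓ + 1).choose (2 * ℓ + 1)

lemma uCoeff_eq_zero {n ℓ : ℕ} (h : n < ℓ) : uCoeff n ℓ = 0 :=
  Nat.choose_eq_zero_of_lt (by omega)

lemma uCoeff_zero_right (n : ℕ) : uCoeff n 0 = n + 1 := by
  simp [uCoeff]

lemma uCoeff_add_two_add (n ℓ : ℕ) :
    uCoeff (n + 2) (ℓ + 1) + uCoeff n (ℓ + 1) = 2 * uCoeff (n + 1) (ℓ + 1) + uCoeff (n + 1) ℓ := by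
  unfold uCoeff
  rw [show n + 2 + (ℓ + 1) + 1 = n + ℓ + 2 + 2 by ring, show n + (ℓ + 1) + 1 = n + ℓ + 2 by ring,
    show n + 1 + (ℓ + 1) + 1 = n + ℓ + 2 + 1 by ring, show n + 1 + ℓ + 1 = n + ℓ + 2 by ring,
    show 2 * (ℓ + 1) + 1 = 2 * ℓ + 1 + 2 by ring]
  exact Nat.choose_add_two_add_choose _ _

lemma uCoeff_eq_choose_sub {n ℓ : ℕ} (h : ℓ ≤ n) : uCoeff n ℓ = (n + ℓ + 1).choose (n - ℓ) :=
  Nat.choose_symm_of_eq_add (by omega)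

variable {R : Type*} [CommRing R]

lemma sum_range_uCoeff_eq_of_lt (y : R) {n N : ℕ} (h : n < N) :
    ∑ ℓ ∈ range N, (uCoeff n ℓ : R) * y ^ ℓ = ∑ ℓ ∈ range (n + 1), (uCoeff n ℓ : R) * y ^ ℓ := by
  refine (sum_subset (range_subset_range.2 h) fun ℓ _ hℓ => ?_).symm
  rw [uCoeff_eq_zero (by simpa using hℓ), Nat.cast_zero, zero_mul]

def uSum (n : ℕ) (y : R) : R := ∑ ℓ ∈ range (n + 1), (uCoeff n ℓ : R) * y ^ ℓ

lemma uSum_add_two (n : ℕ) (y : R) : uSum (n + 2) y = (y + 2) * uSum (n + 1) y - uSum n y := by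
  rw [eq_sub_iff_add_eq]
  show ∑ ℓ ∈ range (n + 3), (uCoeff (n + 2) ℓ : R) * y ^ ℓ
      + ∑ ℓ ∈ range (n + 1), (uCoeff n ℓ : R) * y ^ ℓ
      = (y + 2) * ∑ ℓ ∈ range (n + 2), (uCoeff (n + 1) ℓ : R) * y ^ ℓ
  have hy : y * ∑ ℓ ∈ range (n + 2), (uCoeff (n + 1) ℓ : R) * y ^ ℓ
      = ∑ ℓ ∈ range (n + 2), (uCoeff (n + 1) ℓ : R) * y ^ (ℓ + 1) := by
    rw [mul_sum]; exact sum_congr rfl fun ℓ _ => by ring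
  have h2 : 2 * ∑ ℓ ∈ range (n + 2), (uCoeff (n + 1) ℓ : R) * y ^ ℓ
      = ∑ ℓ ∈ range (n + 2), 2 * (uCoeff (n + 1) (ℓ + 1) : R) * y ^ (ℓ + 1)
        + 2 * (uCoeff (n + 1) 0 : R) := by
    rw [← sum_range_uCoeff_eq_of_lt y (show n + 1 < n + 3 by omega), sum_range_succ', mul_add,
      mul_sum]
    simp only [pow_zero, mul_one, mul_assoc]
  have hsucc : ∑ ℓ ∈ range (n + 2),
        ((uCoeff (n + 2) (ℓ + 1) : R) * y ^ (ℓ + 1) + (uCoeff n (ℓ + 1) : R) * y ^ (ℓ + 1))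
      = ∑ ℓ ∈ range (n + 2), (uCoeff (n + 1) ℓ : R) * y ^ (ℓ + 1)
        + ∑ ℓ ∈ range (n + 2), 2 * (uCoeff (n + 1) (ℓ + 1) : R) * y ^ (ℓ + 1) := by
    rw [← sum_add_distrib]
    refine sum_congr rfl fun ℓ _ => ?_
    rw [← add_mul, ← Nat.cast_add, uCoeff_add_two_add]
    push_cast
    ring
  have hzero : (uCoeff (n + 2) 0 : R) + uCoeff n 0 = 2 * uCoeff (n + 1) 0 := by
    simp only [uCoeff_zero_right]
    push_cast
    ring
  rw [← sum_range_uCoeff_eq_of_lt y (show n < n + 3 by omega), ← sum_add_distrib, sum_range_succ',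
    add_mul, hy, h2]
  linear_combination hsucc + hzero

theorem U_eq_uSum (n : ℕ) : U R n = uSum n (2 * (X - 1)) := by
  induction n using Nat.twoStepInduction with
  | zero => simp [uSum, uCoeff]
  | one =>
    simp [uSum, sum_range_succ, uCoeff]
    ring
  | more n ih0 ih1 =>
    push_cast at ih1 ⊢
    rw [U_add_two, ih0, ih1, uSum_add_two]
    ring

end Polynomial.Chebyshev

theorem chebyshev_U_expansion (n : ℕ) (x : ℝ) :
    (U ℝ (n : ℤ)).eval x =
      ∑ ℓ ∈ Finset.range (n + 1),
        (Nat.choose (n + ℓ + 1) (n - ℓ) : ℝ) * (2 * (x - 1)) ^ ℓ := by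
  rw [U_eq_uSum, uSum, eval_finsetSum]
  refine Finset.sum_congr rfl fun ℓ hℓ => ?_
  rw [uCoeff_eq_choose_sub (Nat.lt_succ_iff.1 (Finset.mem_range.1 hℓ))]
  simp
end

section
/- Let p ≥ 1, 0 ≤ m ≤ n ≤ p−1, ν with 0 ≤ ν ≤ 1/2, δ = 1 + ν/p². Then |U_n^{(m)}(δ)| ≤ (n+1)^{2m+1} e^{ν/2} / (2m+1)!!, where (2m+1)!! = 1·3·5···(2m+1) is the double factorial. -/
open Polynomial Polynomial.Chebyshev

noncomputable def aU (n k : ℕ) : ℝ := (derivative^[k] (U ℝ (n:ℤ))).eval 1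

theorem odeU (n : ℕ) : ∀ k : ℕ, (1 - X^2) * (derivative^[k+2] (U ℝ (n:ℤ))) =
    (2*((k:ℕ):ℝ[X])+3) * (X * derivative^[k+1] (U ℝ (n:ℤ))) -
    ((((n:ℕ):ℝ[X])+1)^2 - (((k:ℕ):ℝ[X])+1)^2) * derivative^[k] (U ℝ (n:ℤ)) := by
  intro k
  induction k with
  | zero =>
    have h1 := congr_arg derivative (add_one_mul_T_eq_poly_in_U (R:=ℝ) (n:ℤ))
    simp only [derivative_mul, derivative_sub, derivative_one, derivative_X, derivative_X_pow,
      derivative_add, T_derivative_eq_U, derivative_intCast, add_sub_cancel_right,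
      C_eq_natCast] at h1
    push_cast at h1 ⊢
    simp only [Function.iterate_succ_apply', Function.iterate_zero_apply]
    linear_combination h1
  | succ k ih =>
    have h := congr_arg derivative ih
    simp only [derivative_mul, derivative_sub, derivative_add, derivative_one, derivative_X,
      derivative_X_pow, derivative_natCast, derivative_ofNat, C_eq_natCast, derivative_pow] at h
    push_cast at h ⊢
    simp only [show k+1+2 = (k+2)+1 from rfl, show k+1+1 = (k+1)+1 from rfl,
      Function.iterate_succ_apply'] at h ⊢
    linear_combination h

theorem recU (n k : ℕ) :
    (2*(k:ℝ)+3) * aU n (k+1) = (((n:ℝ)+1)^2 - ((k:ℝ)+1)^2) * aU n k := by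
  have h := congr_arg (eval (1:ℝ)) (odeU n k)
  simp only [eval_mul, eval_sub, eval_add, eval_pow, eval_one, eval_X, eval_ofNat,
    eval_natCast] at h
  simp only [aU]
  linarith [h]

theorem aU_zero (n : ℕ) : ∀ k, n + 1 ≤ k → aU n k = 0 := by
  intro k hk
  induction k, hk using Nat.le_induction with
  | base =>
    have h := recU n n
    have : (((n:ℝ)+1)^2 - ((n:ℝ)+1)^2) = 0 := by ring
    rw [this, zero_mul] at h
    have hpos : (0:ℝ) < 2*(n:ℝ)+3 := by positivity
    exact (mul_eq_zero.mp h).resolve_left (by positivity)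
  | succ k hk ih =>
    have h := recU n k
    rw [ih, mul_zero] at h
    exact (mul_eq_zero.mp h).resolve_left (by positivity)

theorem aU_bound (n : ℕ) : ∀ k, 0 ≤ aU n k ∧
    aU n k ≤ ((n:ℝ)+1)^(2*k+1) / (Nat.doubleFactorial (2*k+1) : ℝ) := by
  intro k
  induction k with
  | zero =>
    have h0 : aU n 0 = (n:ℝ) + 1 := by
      have : ∀ N : ℕ, (U ℝ (N:ℤ)).eval 1 = N + 1 ∧ (U ℝ ((N:ℤ)+1)).eval 1 = N + 2 := by
        intro N
        induction N with
        | zero => constructor <;> simp [U_zero, U_one]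
        | succ N ih =>
          have h := congr_arg (eval (1:ℝ)) (U_add_two ℝ (N:ℤ))
          simp only [eval_sub, eval_mul, eval_ofNat, eval_X, mul_one] at h
          push_cast
          constructor
          · have := ih.2; push_cast at this; linarith
          · rw [show ((N:ℤ)+1+1 : ℤ) = (N:ℤ)+2 by ring]
            rw [h, ih.1]; have := ih.2; push_cast at this ⊢; linarith
      simpa [aU] using (this n).1
    rw [h0]
    constructor
    · positivity
    · simp [Nat.doubleFactorial]
  | succ k ih =>
    by_cases hkn : k ≤ n
    · have hc : 0 ≤ ((n:ℝ)+1)^2 - ((k:ℝ)+1)^2 := by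
        have : ((k:ℝ)+1) ≤ ((n:ℝ)+1) := by
          have := (Nat.cast_le (α := ℝ)).mpr hkn; linarith
        nlinarith [this]
      have hrec := recU n k
      have hpos : (0:ℝ) < 2*(k:ℝ)+3 := by positivity
      have hval : aU n (k+1) = (((n:ℝ)+1)^2 - ((k:ℝ)+1)^2) * aU n k / (2*(k:ℝ)+3) := by
        field_simp
        linarith [hrec]
      constructor
      · rw [hval]; exact div_nonneg (mul_nonneg hc ih.1) (le_of_lt hpos)
      · rw [hval]
        have hdf : (Nat.doubleFactorial (2*(k+1)+1) : ℝ)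
            = (2*(k:ℝ)+3) * (Nat.doubleFactorial (2*k+1) : ℝ) := by
          rw [show 2*(k+1)+1 = (2*k+1)+2 by ring, Nat.doubleFactorial_add_two]
          push_cast; ring
        rw [hdf]
        have hdfpos : (0:ℝ) < (Nat.doubleFactorial (2*k+1) : ℝ) := by
          exact_mod_cast Nat.doubleFactorial_pos _
        have hstep : (((n:ℝ)+1)^2 - ((k:ℝ)+1)^2) * aU n k ≤ ((n:ℝ)+1)^2 * aU n k := by
          nlinarith [ih.1]
        have h2 : ((n:ℝ)+1)^2 * aU n k ≤ ((n:ℝ)+1)^2 * (((n:ℝ)+1)^(2*k+1) / (Nat.doubleFactorial (2*k+1) : ℝ)) := by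
          have := ih.2
          nlinarith [pow_pos (show (0:ℝ) < (n:ℝ)+1 by positivity) 2]
        rw [div_le_div_iff₀ hpos (by positivity)]
        calc (((n:ℝ)+1)^2 - ((k:ℝ)+1)^2) * aU n k * ((2*(k:ℝ)+3) * (Nat.doubleFactorial (2*k+1):ℝ))
            ≤ ((n:ℝ)+1)^2 * (((n:ℝ)+1)^(2*k+1) / (Nat.doubleFactorial (2*k+1) : ℝ))
              * ((2*(k:ℝ)+3) * (Nat.doubleFactorial (2*k+1):ℝ)) := by
              apply mul_le_mul_of_nonneg_right (le_trans hstep h2) (by positivity)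
          _ = ((n:ℝ)+1)^(2*(k+1)+1) * (2*(k:ℝ)+3) := by
              field_simp
              rw [show 2*(k+1)+1 = (2*k+1)+2 by ring, pow_add]
              ring
    · have hk1 : n + 1 ≤ k + 1 := by omega
      rw [aU_zero n (k+1) hk1]
      exact ⟨le_refl _, by positivity⟩


theorem dfac_grow (m : ℕ) : ∀ i : ℕ,
    Nat.doubleFactorial (2*m+1) * (2^i * Nat.factorial i) ≤ Nat.doubleFactorial (2*(m+i)+1) := by
  intro i
  induction i with
  | zero => simp
  | succ i ih =>
    rw [show 2*(m+(i+1))+1 = (2*(m+i)+1)+2 by ring, Nat.doubleFactorial_add_two]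
    calc Nat.doubleFactorial (2*m+1) * (2^(i+1) * Nat.factorial (i+1))
        = Nat.doubleFactorial (2*m+1) * (2^i * Nat.factorial i) * (2*(i+1)) := by
          rw [pow_succ, Nat.factorial_succ]; ring
      _ ≤ Nat.doubleFactorial (2*(m+i)+1) * (2*(i+1)) := Nat.mul_le_mul_right _ ih
      _ ≤ Nat.doubleFactorial (2*(m+i)+1) * (2*(m+i)+1+2) := by
          apply Nat.mul_le_mul_left; omega
      _ = (2*(m+i)+1+2) * Nat.doubleFactorial (2*(m+i)+1) := Nat.mul_comm _ _

theorem chebyshev_U_deriv_upper_bound (p m n : ℕ) (hp : 1 ≤ p) (hmn : m ≤ n)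
    (hn : n ≤ p - 1) (ν : ℝ) (hν : 0 ≤ ν) (hν2 : ν ≤ 1 / 2) :
    let δ : ℝ := 1 + ν / (p : ℝ) ^ 2
    |((Polynomial.derivative)^[m] (U ℝ (n : ℤ))).eval δ|
      ≤ ((n : ℝ) + 1) ^ (2 * m + 1) * Real.exp (ν / 2) /
          (Nat.doubleFactorial (2 * m + 1) : ℝ) := by
  intro δ
  set s : ℝ := ν / (p : ℝ) ^ 2 with hs_def
  have hδ : δ = 1 + s := rfl
  set f : ℝ[X] := derivative^[m] (U ℝ (n : ℤ)) with hf_def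
  have hp0 : (0:ℝ) < (p:ℝ) := by exact_mod_cast hp
  have hs : 0 ≤ s := by positivity
  have hnp : ((n:ℝ)+1) ≤ (p:ℝ) := by
    have : n + 1 ≤ p := by omega
    exact_mod_cast this
  have hps : ((n:ℝ)+1)^2 * s ≤ ν := by
    have hsq : ((n:ℝ)+1)^2 ≤ (p:ℝ)^2 := by nlinarith
    have h5 := mul_le_mul_of_nonneg_right hsq hν
    rw [hs_def, mul_div_assoc', div_le_iff₀ (by positivity)]
    nlinarith
  -- Taylor expansion
  have h0 : f.eval δ = (taylor 1 f).eval s := by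
    rw [taylor_eval, hδ, add_comm]
  have hcoeff : ∀ i : ℕ, (taylor 1 f).coeff i = aU n (m+i) / (Nat.factorial i : ℝ) := by
    intro i
    rw [taylor_coeff]
    have hf := congr_fun (Polynomial.factorial_smul_hasseDeriv (R:=ℝ) i) f
    simp only [LinearMap.smul_apply] at hf
    have h3 : (derivative^[i] f).eval 1 = aU n (m+i) := by
      rw [hf_def, ← Function.iterate_add_apply, show i + m = m + i by omega]
      rfl
    have h2 := congr_arg (eval (1:ℝ)) hf
    rw [nsmul_eq_mul, eval_mul, eval_natCast, h3] at h2
    have hfac : (Nat.factorial i : ℝ) ≠ 0 := by positivity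
    rw [eq_div_iff hfac]
    linarith [h2]
  set N := (taylor 1 f).natDegree + 1
  have h1 : (taylor 1 f).eval s = ∑ i ∈ Finset.range N, aU n (m+i) / (Nat.factorial i : ℝ) * s^i := by
    rw [eval_eq_sum_range]
    exact Finset.sum_congr rfl fun i _ => by rw [hcoeff]
  set B : ℝ := ((n:ℝ)+1)^(2*m+1) / (Nat.doubleFactorial (2*m+1) : ℝ) with hB_def
  have hBpos : 0 ≤ B := by positivity
  have hterm : ∀ i : ℕ, aU n (m+i) / (Nat.factorial i : ℝ) * s^i ≤ B * ((ν/2)^i / (Nat.factorial i : ℝ)) := by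
    intro i
    have ha := (aU_bound n (m+i)).1
    have hb := (aU_bound n (m+i)).2
    have hF1 : (1:ℝ) ≤ (Nat.factorial i : ℝ) := by exact_mod_cast Nat.one_le_iff_ne_zero.mpr (Nat.factorial_ne_zero i)
    have hD2pos : (0:ℝ) < (Nat.doubleFactorial (2*(m+i)+1) : ℝ) := by
      exact_mod_cast Nat.doubleFactorial_pos _
    have hD1pos : (0:ℝ) < (Nat.doubleFactorial (2*m+1) : ℝ) := by
      exact_mod_cast Nat.doubleFactorial_pos _
    have hgrow : (Nat.doubleFactorial (2*m+1) : ℝ) * (2^i * (Nat.factorial i : ℝ))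
        ≤ (Nat.doubleFactorial (2*(m+i)+1) : ℝ) := by exact_mod_cast dfac_grow m i
    -- step 1: aU * (D1 * 2^i) ≤ (n+1)^(2(m+i)+1)
    have key1 : aU n (m+i) * ((Nat.doubleFactorial (2*m+1) : ℝ) * 2^i)
        ≤ ((n:ℝ)+1)^(2*(m+i)+1) := by
      have h4 : (Nat.doubleFactorial (2*m+1) : ℝ) * 2^i ≤ (Nat.doubleFactorial (2*(m+i)+1) : ℝ) := by
        nlinarith [hF1, hD1pos, pow_pos (show (0:ℝ) < 2 by norm_num) i]
      calc aU n (m+i) * ((Nat.doubleFactorial (2*m+1) : ℝ) * 2^i)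
          ≤ (((n:ℝ)+1)^(2*(m+i)+1) / (Nat.doubleFactorial (2*(m+i)+1) : ℝ))
            * (Nat.doubleFactorial (2*(m+i)+1) : ℝ) := by
            apply mul_le_mul hb h4 (by positivity) (by positivity)
        _ = ((n:ℝ)+1)^(2*(m+i)+1) := by field_simp
    -- step 2: (n+1)^(2(m+i)+1) * s^i ≤ (n+1)^(2m+1) * ν^i
    have key2 : ((n:ℝ)+1)^(2*(m+i)+1) * s^i ≤ ((n:ℝ)+1)^(2*m+1) * ν^i := by
      rw [show 2*(m+i)+1 = (2*m+1)+2*i by ring, pow_add, pow_mul, mul_assoc, ← mul_pow]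
      have : (((n:ℝ)+1)^2 * s)^i ≤ ν^i :=
        pow_le_pow_left₀ (by positivity) hps i
      exact mul_le_mul_of_nonneg_left this (by positivity)
    -- combine
    have key3 : aU n (m+i) * s^i * ((Nat.doubleFactorial (2*m+1) : ℝ) * 2^i)
        ≤ ((n:ℝ)+1)^(2*m+1) * ν^i := by
      calc aU n (m+i) * s^i * ((Nat.doubleFactorial (2*m+1) : ℝ) * 2^i)
          = aU n (m+i) * ((Nat.doubleFactorial (2*m+1) : ℝ) * 2^i) * s^i := by ring
        _ ≤ ((n:ℝ)+1)^(2*(m+i)+1) * s^i :=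
            mul_le_mul_of_nonneg_right key1 (by positivity)
        _ ≤ ((n:ℝ)+1)^(2*m+1) * ν^i := key2
    have hL : aU n (m+i) / (Nat.factorial i : ℝ) * s^i
        = aU n (m+i) * s^i / (Nat.factorial i : ℝ) := by ring
    have hR : B * ((ν/2)^i / (Nat.factorial i : ℝ))
        = ((n:ℝ)+1)^(2*m+1) * ν^i
          / ((Nat.factorial i : ℝ) * (Nat.doubleFactorial (2*m+1) : ℝ) * 2^i) := by
      rw [hB_def, div_pow]
      ring
    rw [hL, hR, div_le_div_iff₀ (by positivity) (by positivity)]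
    calc aU n (m+i) * s^i * ((Nat.factorial i : ℝ) * (Nat.doubleFactorial (2*m+1) : ℝ) * 2^i)
        = aU n (m+i) * s^i * ((Nat.doubleFactorial (2*m+1) : ℝ) * 2^i) * (Nat.factorial i : ℝ) := by
          ring
      _ ≤ ((n:ℝ)+1)^(2*m+1) * ν^i * (Nat.factorial i : ℝ) :=
          mul_le_mul_of_nonneg_right key3 (by positivity)
  have hnn : 0 ≤ f.eval δ := by
    rw [h0, h1]
    apply Finset.sum_nonneg
    intro i _
    have := (aU_bound n (m+i)).1
    positivity
  rw [abs_of_nonneg hnn, h0, h1]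
  calc ∑ i ∈ Finset.range N, aU n (m+i) / (Nat.factorial i : ℝ) * s^i
      ≤ ∑ i ∈ Finset.range N, B * ((ν/2)^i / (Nat.factorial i : ℝ)) :=
        Finset.sum_le_sum fun i _ => hterm i
    _ = B * ∑ i ∈ Finset.range N, (ν/2)^i / (Nat.factorial i : ℝ) := by
        rw [Finset.mul_sum]
    _ ≤ B * Real.exp (ν/2) := by
        apply mul_le_mul_of_nonneg_left _ hBpos
        exact Real.sum_le_exp_of_nonneg (by positivity) N
    _ = ((n : ℝ) + 1) ^ (2 * m + 1) * Real.exp (ν / 2) / (Nat.doubleFactorial (2 * m + 1) : ℝ) := by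
        rw [hB_def]; ring
end
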